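/- arXiv:2204.11683 — 4 statements merged into one kernel-verified Lean document; each statement's English description precedes it below -/
import Mathlib

section
/- Let α : Fin m → ℝ and β : Fin n → ℝ be nonnegative weights with ∑_j α_j = 1 and ∑_k β_k = 1, and let p : Fin m → [0,1] and q : Fin n → [0,1]. Then ∑_{j,k} α_j β_k · 2√((p_j⋆q_k)(1−(p_j⋆q_k))) ≥ f(∑_j α_j · 2√(p_j(1−p_j)), ∑_k β_k · 2√(q_k(1−q_k))). (This is the statement that for BMS channels V, W with BSC-decompositions given by these mixtures, Z(V Ｓ W) ≥ f(Z(V), Z(W)).) -/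
/-!
Writing `x = Z(BSC(p))`, `y = Z(BSC(q))`, one has `Z(BSC(p⋆q)) = f(x, y)` exactly, so the claim is
Jensen's inequality for `f` applied to the two mixtures. Although `f` is not jointly convex, it is
convex in each variable separately on `[0,1]`: for fixed `y` with `y² ≤ 1`,
`f(x, y) = √((1 - y²) x² + y²)` is the Euclidean norm of the affine map `x ↦ (√(1 - y²) x, y)`.
Jensen in `x` and then in `y` gives the inequality.
-/

/-- The serial-combination crossover probability `p⋆q := p(1−q) + (1−p)q`. -/
def serial (p q : ℝ) : ℝ := p * (1 - q) + (1 - p) * q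

/-- The Bhattacharyya parameter of `BSC(p)`, namely `Z(BSC(p)) := 2√(p(1−p))`. -/
noncomputable def bhat (p : ℝ) : ℝ := 2 * Real.sqrt (p * (1 - p))

/-- The function `f(x,y) := √(x² + y² − x²y²)`. -/
noncomputable def fB (x y : ℝ) : ℝ := Real.sqrt (x ^ 2 + y ^ 2 - x ^ 2 * y ^ 2)

open Finset

theorem map_sum_sum_le_of_convexOn_left_right {E F ι κ : Type*}
    [AddCommGroup E] [Module ℝ E] [AddCommGroup F] [Module ℝ F]
    {s : Set E} {r : Set F} {g : E → F → ℝ} (hr : Convex ℝ r)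
    (hleft : ∀ y ∈ r, ConvexOn ℝ s (g · y)) (hright : ∀ x ∈ s, ConvexOn ℝ r (g x))
    {t : Finset ι} {u : Finset κ} {a : ι → ℝ} {b : κ → ℝ} {x : ι → E} {y : κ → F}
    (ha₀ : ∀ i ∈ t, 0 ≤ a i) (ha₁ : ∑ i ∈ t, a i = 1) (hx : ∀ i ∈ t, x i ∈ s)
    (hb₀ : ∀ j ∈ u, 0 ≤ b j) (hb₁ : ∑ j ∈ u, b j = 1) (hy : ∀ j ∈ u, y j ∈ r) :
    g (∑ i ∈ t, a i • x i) (∑ j ∈ u, b j • y j) ≤ ∑ i ∈ t, ∑ j ∈ u, a i * b j * g (x i) (y j) := by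
  set Y := ∑ j ∈ u, b j • y j
  have hY : Y ∈ r := hr.sum_mem hb₀ hb₁ hy
  calc g (∑ i ∈ t, a i • x i) Y ≤ ∑ i ∈ t, a i * g (x i) Y :=
        (hleft Y hY).map_sum_le ha₀ ha₁ hx
    _ ≤ ∑ i ∈ t, a i * ∑ j ∈ u, b j * g (x i) (y j) := by
        gcongr with i hi
        · exact ha₀ i hi
        · exact (hright (x i) (hx i hi)).map_sum_le hb₀ hb₁ hy
    _ = ∑ i ∈ t, ∑ j ∈ u, a i * b j * g (x i) (y j) := by
        simp only [mul_sum, mul_assoc]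

open Complex in
theorem convexOn_sqrt_mul_sq_add {a b : ℝ} (ha : 0 ≤ a) (hb : 0 ≤ b) :
    ConvexOn ℝ Set.univ (fun x : ℝ => √(a * x ^ 2 + b)) := by
  have h := (convexOn_norm convex_univ).comp_affineMap
    (AffineMap.lineMap (√b * I : ℂ) (√a + √b * I))
  have heq : (norm ∘ AffineMap.lineMap (√b * I : ℂ) (√a + √b * I) : ℝ → ℝ)
      = fun x => √(a * x ^ 2 + b) := by
    ext x
    have hline : AffineMap.lineMap (√b * I : ℂ) (√a + √b * I) x = ↑(√a * x) + √b * I := by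
      rw [AffineMap.lineMap_apply_module', Complex.real_smul]; push_cast; ring
    rw [Function.comp_apply, hline, norm_add_mul_I, mul_pow, Real.sq_sqrt ha, Real.sq_sqrt hb]
  rwa [Set.preimage_univ, heq] at h

lemma fB_comm (x y : ℝ) : fB x y = fB y x := by
  unfold fB; ring_nf

theorem convexOn_fB_left {y : ℝ} (hy : y ^ 2 ≤ 1) : ConvexOn ℝ Set.univ (fB · y) := by
  convert convexOn_sqrt_mul_sq_add (sub_nonneg.2 hy) (sq_nonneg y) using 2 with x
  unfold fB; ring_nf

theorem convexOn_fB_right {x : ℝ} (hx : x ^ 2 ≤ 1) : ConvexOn ℝ Set.univ (fB x) := by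
  rw [show fB x = (fB · x) from funext (fB_comm x)]
  exact convexOn_fB_left hx

lemma bhat_eq_sqrt (p : ℝ) : bhat p = √(4 * (p * (1 - p))) := by
  rw [bhat, Real.sqrt_mul zero_le_four, show (4 : ℝ) = 2 ^ 2 by norm_num, Real.sqrt_sq zero_le_two]

lemma bhat_sq {p : ℝ} (hp : p ∈ Set.Icc (0 : ℝ) 1) : bhat p ^ 2 = 4 * (p * (1 - p)) := by
  rw [bhat_eq_sqrt, Real.sq_sqrt (by nlinarith [hp.1, hp.2])]

lemma bhat_mem_Icc {p : ℝ} (hp : p ∈ Set.Icc (0 : ℝ) 1) : bhat p ∈ Set.Icc (0 : ℝ) 1 := by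
  have hsq : bhat p ^ 2 ≤ 1 := by nlinarith [bhat_sq hp, sq_nonneg (2 * p - 1)]
  have h0 : 0 ≤ bhat p := by unfold bhat; positivity
  exact ⟨h0, (pow_le_one_iff_of_nonneg h0 two_ne_zero).1 hsq⟩

theorem bhat_serial {p q : ℝ} (hp : p ∈ Set.Icc (0 : ℝ) 1) (hq : q ∈ Set.Icc (0 : ℝ) 1) :
    bhat (serial p q) = fB (bhat p) (bhat q) := by
  rw [bhat_eq_sqrt, fB, bhat_sq hp, bhat_sq hq, serial]
  ring_nf

/-- For BMS channels `V, W` with BSC-decompositions `∑ α_j BSC(p_j)` and `∑ β_k BSC(q_k)`,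
one has `Z(V Ｓ W) ≥ f(Z(V), Z(W))`. -/
theorem stmt_4 (m n : ℕ) (α : Fin m → ℝ) (β : Fin n → ℝ)
    (hα : ∀ j, 0 ≤ α j) (hβ : ∀ k, 0 ≤ β k)
    (hαsum : ∑ j, α j = 1) (hβsum : ∑ k, β k = 1)
    (p : Fin m → ℝ) (q : Fin n → ℝ)
    (hp : ∀ j, p j ∈ Set.Icc (0 : ℝ) 1) (hq : ∀ k, q k ∈ Set.Icc (0 : ℝ) 1) :
    ∑ j, ∑ k, α j * β k * bhat (serial (p j) (q k))
      ≥ fB (∑ j, α j * bhat (p j)) (∑ k, β k * bhat (q k)) := by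
  have hsq_le_one {z : ℝ} (hz : z ∈ Set.Icc (0 : ℝ) 1) : z ^ 2 ≤ 1 := pow_le_one₀ hz.1 hz.2
  have jensen := map_sum_sum_le_of_convexOn_left_right (convex_Icc (0 : ℝ) 1)
    (fun y hy => (convexOn_fB_left (hsq_le_one hy)).subset (Set.subset_univ _) (convex_Icc 0 1))
    (fun x hx => (convexOn_fB_right (hsq_le_one hx)).subset (Set.subset_univ _) (convex_Icc 0 1))
    (fun j _ => hα j) hαsum (fun j _ => bhat_mem_Icc (hp j))
    (fun k _ => hβ k) hβsum (fun k _ => bhat_mem_Icc (hq k))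
  simp only [smul_eq_mul] at jensen
  simpa only [bhat_serial (hp _) (hq _)] using jensen
end

section
/- Let α : Fin m → ℝ and β : Fin n → ℝ be nonnegative weights with ∑_j α_j = 1 and ∑_k β_k = 1, and let p : Fin m → (0,1) and q : Fin n → (0,1). For each pair (j,k) set a_{jk} := p_j(1−q_k)/(p_j⋆q_k) and b_{jk} := p_j q_k/(1−(p_j⋆q_k)). Then ∑_{j,k} α_j β_k [ (p_j⋆q_k) · 2√(a_{jk}(1−a_{jk})) + (1−(p_j⋆q_k)) · 2√(b_{jk}(1−b_{jk})) ] = (∑_j α_j · 2√(p_j(1−p_j))) · (∑_k β_k · 2√(q_k(1−q_k))). (This is the statement that for all BMS channels V, W, Z(V Ｐ W) = Z(V)·Z(W).) -/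
/-
For a single pair of BSCs the identity `Z(BSC(p) Ｐ BSC(q)) = Z(BSC(p)) Z(BSC(q))` is algebra:
if `a = x / s` then `s · Z(BSC(a)) = 2√(x (s - x))`, and both branches of the parallel combination
give `2√(p(1-p)q(1-q))`, since `p⋆q - p(1-q) = (1-p)q` and `1 - p⋆q - pq = (1-p)(1-q)`.
Bilinearity of the parallel combination and of the product of the two sums finishes the proof.
-/

lemma mul_bhat_div {s : ℝ} (hs : 0 ≤ s) (x : ℝ) :
    s * bhat (x / s) = 2 * Real.sqrt (x * (s - x)) := by
  rcases hs.eq_or_lt with rfl | hs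
  · have hneg : x * (0 - x) ≤ 0 := by nlinarith [sq_nonneg x]
    rw [zero_mul, Real.sqrt_eq_zero_of_nonpos hneg, mul_zero]
  have hdiv : x / s * (1 - x / s) = x * (s - x) / s ^ 2 := by
    field_simp
  rw [bhat, hdiv, Real.sqrt_div' _ (sq_nonneg s), Real.sqrt_sq hs.le]
  field_simp

lemma serial_nonneg {p q : ℝ} (hp : p ∈ Set.Icc (0 : ℝ) 1) (hq : q ∈ Set.Icc (0 : ℝ) 1) :
    0 ≤ serial p q := by
  unfold serial
  nlinarith [hp.1, hp.2, hq.1, hq.2]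

lemma one_sub_serial_nonneg {p q : ℝ} (hp : p ∈ Set.Icc (0 : ℝ) 1)
    (hq : q ∈ Set.Icc (0 : ℝ) 1) : 0 ≤ 1 - serial p q := by
  unfold serial
  nlinarith [hp.1, hp.2, hq.1, hq.2]

theorem serial_mul_bhat_add_one_sub_serial_mul_bhat {p q : ℝ} (hp : p ∈ Set.Icc (0 : ℝ) 1)
    (hq : q ∈ Set.Icc (0 : ℝ) 1) :
    serial p q * bhat (p * (1 - q) / serial p q)
        + (1 - serial p q) * bhat (p * q / (1 - serial p q))
      = bhat p * bhat q := by
  have hp' : 0 ≤ p * (1 - p) := mul_nonneg hp.1 (sub_nonneg.2 hp.2)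
  rw [mul_bhat_div (serial_nonneg hp hq), mul_bhat_div (one_sub_serial_nonneg hp hq)]
  have hupper : p * (1 - q) * (serial p q - p * (1 - q)) = p * (1 - p) * (q * (1 - q)) := by
    unfold serial; ring
  have hlower : p * q * (1 - serial p q - p * q) = p * (1 - p) * (q * (1 - q)) := by
    unfold serial; ring
  rw [hupper, hlower, Real.sqrt_mul hp', bhat, bhat]
  ring

theorem stmt_8_general (m n : ℕ) (α : Fin m → ℝ) (β : Fin n → ℝ)
    (p : Fin m → ℝ) (q : Fin n → ℝ)
    (hp : ∀ j, p j ∈ Set.Ioo (0 : ℝ) 1) (hq : ∀ k, q k ∈ Set.Ioo (0 : ℝ) 1)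
    (a b : Fin m → Fin n → ℝ)
    (ha : ∀ j k, a j k = p j * (1 - q k) / serial (p j) (q k))
    (hb : ∀ j k, b j k = p j * q k / (1 - serial (p j) (q k))) :
    ∑ j, ∑ k, α j * β k *
        (serial (p j) (q k) * (2 * Real.sqrt (a j k * (1 - a j k)))
          + (1 - serial (p j) (q k)) * (2 * Real.sqrt (b j k * (1 - b j k))))
      = (∑ j, α j * bhat (p j)) * (∑ k, β k * bhat (q k)) := by
  rw [Finset.sum_mul_sum]
  refine Finset.sum_congr rfl fun j _ => Finset.sum_congr rfl fun k _ => ?_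
  have hpair := serial_mul_bhat_add_one_sub_serial_mul_bhat
    (Set.Ioo_subset_Icc_self (hp j)) (Set.Ioo_subset_Icc_self (hq k))
  rw [← ha, ← hb] at hpair
  rw [← bhat, ← bhat, hpair]
  ring

/-- For BMS channels `V, W` with BSC-decompositions `∑ α_j BSC(p_j)` and `∑ β_k BSC(q_k)`,
the parallel combination (extended bi-linearly from
`BSC(p) Ｐ BSC(q) := (p⋆q)·BSC(p(1−q)/(p⋆q)) + (1−(p⋆q))·BSC(pq/(1−(p⋆q)))`)
satisfies `Z(V Ｐ W) = Z(V)·Z(W)`. -/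
theorem stmt_8 (m n : ℕ) (α : Fin m → ℝ) (β : Fin n → ℝ)
    (hα : ∀ j, 0 ≤ α j) (hβ : ∀ k, 0 ≤ β k)
    (hαsum : ∑ j, α j = 1) (hβsum : ∑ k, β k = 1)
    (p : Fin m → ℝ) (q : Fin n → ℝ)
    (hp : ∀ j, p j ∈ Set.Ioo (0 : ℝ) 1) (hq : ∀ k, q k ∈ Set.Ioo (0 : ℝ) 1)
    (a b : Fin m → Fin n → ℝ)
    (ha : ∀ j k, a j k = p j * (1 - q k) / serial (p j) (q k))
    (hb : ∀ j k, b j k = p j * q k / (1 - serial (p j) (q k))) :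
    ∑ j, ∑ k, α j * β k *
        (serial (p j) (q k) * (2 * Real.sqrt (a j k * (1 - a j k)))
          + (1 - serial (p j) (q k)) * (2 * Real.sqrt (b j k * (1 - b j k))))
      = (∑ j, α j * bhat (p j)) * (∑ k, β k * bhat (q k)) :=
  stmt_8_general m n α β p q hp hq a b ha hb
end

section
/- Let p, q, r be real numbers with 0 ≤ p ≤ 1/2, 0 ≤ q ≤ 1/2, 0 ≤ r ≤ 1/2. Write p̄ := 1−p, q̄ := 1−q, r̄ := 1−r, and set x := 2√(p p̄), y := 2√(q q̄), z := 2√(r r̄). Define C := (x²y² + (1−x²)z² + (1−y²)z²)/4 and D := (√(1−x²) · √(1−y²) · z²)/2. Then 2√((p q̄ r̄ + p̄ q r)(p q̄ r + p̄ q r̄)) + 2√((p q r̄ + p̄ q̄ r)(p q r + p̄ q̄ r̄)) = √(C + D) + √(C − D). In particular C + D ≥ 0 and C − D ≥ 0. -/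
/-!
Writing `p̄ = 1 - p` etc., one has `x² = 4 p p̄` and, because `p ≤ 1/2`, `√(1 - x²) = 1 - 2p`
(and likewise for `q`, `z² = 4 r r̄`). Substituting, `C - D` and `C + D` become polynomials in
`p, q, r`, and they factor as `4 (p q̄ r̄ + p̄ q r)(p q̄ r + p̄ q r̄)` and
`4 (p q r̄ + p̄ q̄ r)(p q r + p̄ q̄ r̄)`; both are products of nonnegative probabilities, and
`√(4t) = 2√t` finishes the identity.
-/

open Real

lemma sq_two_mul_sqrt_mul_one_sub {p : ℝ} (hp0 : 0 ≤ p) (hp1 : p ≤ 1) :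
    (2 * √(p * (1 - p))) ^ 2 = 4 * (p * (1 - p)) := by
  rw [mul_pow, sq_sqrt (mul_nonneg hp0 (by linarith))]
  norm_num

lemma sqrt_one_sub_four_mul_mul_one_sub {p : ℝ} (hp : p ≤ 1 / 2) :
    √(1 - 4 * (p * (1 - p))) = 1 - 2 * p := by
  rw [show 1 - 4 * (p * (1 - p)) = (1 - 2 * p) ^ 2 by ring, sqrt_sq (by linarith)]

lemma sqrt_four_mul (t : ℝ) : √(4 * t) = 2 * √t := by
  rw [sqrt_mul zero_le_four, show (4 : ℝ) = 2 ^ 2 by norm_num, sqrt_sq zero_le_two]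

lemma sub_eq_four_mul_crossover (p q r : ℝ) :
    (4 * (p * (1 - p)) * (4 * (q * (1 - q))) + (1 - 4 * (p * (1 - p))) * (4 * (r * (1 - r)))
        + (1 - 4 * (q * (1 - q))) * (4 * (r * (1 - r)))) / 4
      - (1 - 2 * p) * (1 - 2 * q) * (4 * (r * (1 - r))) / 2
      = 4 * ((p * (1 - q) * (1 - r) + (1 - p) * q * r)
          * (p * (1 - q) * r + (1 - p) * q * (1 - r))) := by
  ring

lemma add_eq_four_mul_crossover (p q r : ℝ) :
    (4 * (p * (1 - p)) * (4 * (q * (1 - q))) + (1 - 4 * (p * (1 - p))) * (4 * (r * (1 - r)))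
        + (1 - 4 * (q * (1 - q))) * (4 * (r * (1 - r)))) / 4
      + (1 - 2 * p) * (1 - 2 * q) * (4 * (r * (1 - r))) / 2
      = 4 * ((p * q * (1 - r) + (1 - p) * (1 - q) * r)
          * (p * q * r + (1 - p) * (1 - q) * (1 - r))) := by
  ring

/-- The Bhattacharyya parameter of `(BSC(p) Ｐ BSC(q)) Ｓ BSC(r)` expressed purely in
terms of the Bhattacharyya parameters `x = 2√(p(1−p))`, `y = 2√(q(1−q))`, `z = 2√(r(1−r))`:
with `C := (x²y² + (1−x²)z² + (1−y²)z²)/4` and `D := (√(1−x²)·√(1−y²)·z²)/2`, it equals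
`√(C+D) + √(C−D)`; moreover `C + D ≥ 0` and `C − D ≥ 0`. -/
theorem stmt_10 (p q r : ℝ) (hp0 : 0 ≤ p) (hp1 : p ≤ 1 / 2)
    (hq0 : 0 ≤ q) (hq1 : q ≤ 1 / 2) (hr0 : 0 ≤ r) (hr1 : r ≤ 1 / 2)
    (x y z : ℝ)
    (hx : x = 2 * Real.sqrt (p * (1 - p)))
    (hy : y = 2 * Real.sqrt (q * (1 - q)))
    (hz : z = 2 * Real.sqrt (r * (1 - r)))
    (C D : ℝ)
    (hC : C = (x ^ 2 * y ^ 2 + (1 - x ^ 2) * z ^ 2 + (1 - y ^ 2) * z ^ 2) / 4)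
    (hD : D = Real.sqrt (1 - x ^ 2) * Real.sqrt (1 - y ^ 2) * z ^ 2 / 2) :
    (2 * Real.sqrt ((p * (1 - q) * (1 - r) + (1 - p) * q * r)
          * (p * (1 - q) * r + (1 - p) * q * (1 - r)))
        + 2 * Real.sqrt ((p * q * (1 - r) + (1 - p) * (1 - q) * r)
          * (p * q * r + (1 - p) * (1 - q) * (1 - r)))
      = Real.sqrt (C + D) + Real.sqrt (C - D))
    ∧ 0 ≤ C + D ∧ 0 ≤ C - D := by
  have hp : 0 ≤ 1 - p := by linarith
  have hq : 0 ≤ 1 - q := by linarith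
  have hr : 0 ≤ 1 - r := by linarith
  have hx2 : x ^ 2 = 4 * (p * (1 - p)) := hx ▸ sq_two_mul_sqrt_mul_one_sub hp0 (by linarith)
  have hy2 : y ^ 2 = 4 * (q * (1 - q)) := hy ▸ sq_two_mul_sqrt_mul_one_sub hq0 (by linarith)
  have hz2 : z ^ 2 = 4 * (r * (1 - r)) := hz ▸ sq_two_mul_sqrt_mul_one_sub hr0 (by linarith)
  have hCD_sub := sub_eq_four_mul_crossover p q r
  have hCD_add := add_eq_four_mul_crossover p q r
  rw [← sqrt_one_sub_four_mul_mul_one_sub hp1, ← sqrt_one_sub_four_mul_mul_one_sub hq1,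
    ← hx2, ← hy2, ← hz2, ← hC, ← hD] at hCD_sub hCD_add
  rw [hCD_sub, hCD_add, sqrt_four_mul, sqrt_four_mul, add_comm]
  exact ⟨rfl, by positivity, by positivity⟩
end

section
/- Let n be a positive integer and let g : ℝ³ → ℝ be a function on the cube [0, 1/n]³ such that g vanishes at all eight corners of the cube (i.e., at all points whose coordinates are each 0 or 1/n). Suppose there exist m₁, m₂, m₃ ≥ 0 such that, on the cube, for each fixed (y,z) the map x ↦ g(x,y,z) is twice differentiable with second derivative ≤ m₁, for each fixed (x,z) the map y ↦ g(x,y,z) is twice differentiable with second derivative ≤ m₂, and for each fixed (x,y) the map z ↦ g(x,y,z) is twice differentiable with second derivative ≤ m₃. Then g(x,y,z) ≥ −(m₁ + m₂ + m₃)/(8n²) for all (x,y,z) ∈ [0, 1/n]³. -/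
/-!
Adding `m/2 · (x - a)(b - x)`, whose second derivative is `-m`, to a function of one variable
with second derivative at most `m` on `[a, b]` makes it concave, so it is bounded below by its
values at the endpoints; since `(x - a)(b - x) ≤ (b - a)²/4`, a lower bound `c` at the endpoints
gives the bound `c - m (b - a)²/8` on `[a, b]`. On a box this is applied along the edges in the
third coordinate, then across the faces in the second, then through the box in the first.
-/

open Set

def SecondDerivLE (f : ℝ → ℝ) (s : Set ℝ) (m : ℝ) : Prop :=
  ∃ d₁ d₂ : ℝ → ℝ, (∀ x ∈ s, HasDerivAt f (d₁ x) x) ∧ (∀ x ∈ s, HasDerivAt d₁ (d₂ x) x) ∧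
    ∀ x ∈ s, d₂ x ≤ m

lemma SecondDerivLE.concaveOn_add_mul_sub_mul_sub {f : ℝ → ℝ} {a b m : ℝ}
    (hf : SecondDerivLE f (Icc a b) m) :
    ConcaveOn ℝ (Icc a b) (fun x ↦ f x + m / 2 * ((x - a) * (b - x))) := by
  obtain ⟨d₁, d₂, hd₁, hd₂, hle⟩ := hf
  have hq' (x : ℝ) :
      HasDerivAt (fun x ↦ m / 2 * ((x - a) * (b - x))) (m / 2 * (a + b - 2 * x)) x :=
    ((((hasDerivAt_id' x).sub_const a).mul ((hasDerivAt_id' x).const_sub b)).const_mul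
      (m / 2)).congr_deriv (by ring)
  have hq'' (x : ℝ) : HasDerivAt (fun x ↦ m / 2 * (a + b - 2 * x)) (-m) x :=
    ((((hasDerivAt_id' x).const_mul 2).const_sub (a + b)).const_mul (m / 2)).congr_deriv
      (by ring)
  refine concaveOn_of_hasDerivWithinAt2_nonpos (convex_Icc a b)
    (f' := fun x ↦ d₁ x + m / 2 * (a + b - 2 * x)) (f'' := fun x ↦ d₂ x - m) ?_ ?_ ?_ ?_
  · exact fun x hx ↦ ((hd₁ x hx).add (hq' x)).continuousAt.continuousWithinAt
  · exact fun x hx ↦ ((hd₁ x (interior_subset hx)).add (hq' x)).hasDerivWithinAt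
  · exact fun x hx ↦
      ((hd₂ x (interior_subset hx)).add (hq'' x)).hasDerivWithinAt.congr_deriv (by ring)
  · exact fun x hx ↦ sub_nonpos.2 (hle x (interior_subset hx))

lemma SecondDerivLE.sub_mul_sq_div_eight_le {f : ℝ → ℝ} {a b m c : ℝ}
    (hf : SecondDerivLE f (Icc a b) m) (hm : 0 ≤ m) (ha : c ≤ f a) (hb : c ≤ f b)
    {x : ℝ} (hx : x ∈ Icc a b) :
    c - m * (b - a) ^ 2 / 8 ≤ f x := by
  have hab : a ≤ b := hx.1.trans hx.2
  have hmin := hf.concaveOn_add_mul_sub_mul_sub.min_le_of_mem_Icc (left_mem_Icc.2 hab)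
    (right_mem_Icc.2 hab) hx
  simp only [sub_self, zero_mul, mul_zero, add_zero] at hmin
  have hpar : m / 2 * ((x - a) * (b - x)) ≤ m * (b - a) ^ 2 / 8 := by
    nlinarith [mul_nonneg hm (sq_nonneg (2 * x - a - b))]
  linarith [le_min ha hb]

lemma mem_Icc_of_eq_or_eq {α : Type*} [Preorder α] {a b x : α} (hab : a ≤ b)
    (hx : x = a ∨ x = b) : x ∈ Icc a b := by
  rcases hx with rfl | rfl
  exacts [left_mem_Icc.2 hab, right_mem_Icc.2 hab]

theorem neg_le_of_eq_zero_at_corners {g : ℝ → ℝ → ℝ → ℝ} {a₁ b₁ a₂ b₂ a₃ b₃ m₁ m₂ m₃ : ℝ}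
    (hcorners : ∀ x y z, (x = a₁ ∨ x = b₁) → (y = a₂ ∨ y = b₂) → (z = a₃ ∨ z = b₃) →
      g x y z = 0)
    (hm₁ : 0 ≤ m₁) (hm₂ : 0 ≤ m₂) (hm₃ : 0 ≤ m₃)
    (hx : ∀ y ∈ Icc a₂ b₂, ∀ z ∈ Icc a₃ b₃, SecondDerivLE (fun x ↦ g x y z) (Icc a₁ b₁) m₁)
    (hy : ∀ x ∈ Icc a₁ b₁, ∀ z ∈ Icc a₃ b₃, SecondDerivLE (fun y ↦ g x y z) (Icc a₂ b₂) m₂)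
    (hz : ∀ x ∈ Icc a₁ b₁, ∀ y ∈ Icc a₂ b₂, SecondDerivLE (fun z ↦ g x y z) (Icc a₃ b₃) m₃)
    {x y z : ℝ} (hxI : x ∈ Icc a₁ b₁) (hyI : y ∈ Icc a₂ b₂) (hzI : z ∈ Icc a₃ b₃) :
    -((m₁ * (b₁ - a₁) ^ 2 + m₂ * (b₂ - a₂) ^ 2 + m₃ * (b₃ - a₃) ^ 2) / 8) ≤ g x y z := by
  have hab₁ := hxI.1.trans hxI.2
  have hab₂ := hyI.1.trans hyI.2
  have hab₃ := hzI.1.trans hzI.2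
  have edge : ∀ x', (x' = a₁ ∨ x' = b₁) → ∀ y', (y' = a₂ ∨ y' = b₂) →
      0 - m₃ * (b₃ - a₃) ^ 2 / 8 ≤ g x' y' z := fun x' hx' y' hy' ↦
    SecondDerivLE.sub_mul_sq_div_eight_le
      (hz x' (mem_Icc_of_eq_or_eq hab₁ hx') y' (mem_Icc_of_eq_or_eq hab₂ hy')) hm₃
      (hcorners x' y' a₃ hx' hy' (Or.inl rfl)).ge (hcorners x' y' b₃ hx' hy' (Or.inr rfl)).ge hzI
  have face : ∀ x', (x' = a₁ ∨ x' = b₁) →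
      0 - m₃ * (b₃ - a₃) ^ 2 / 8 - m₂ * (b₂ - a₂) ^ 2 / 8 ≤ g x' y z := fun x' hx' ↦
    (hy x' (mem_Icc_of_eq_or_eq hab₁ hx') z hzI).sub_mul_sq_div_eight_le hm₂
      (edge x' hx' a₂ (Or.inl rfl)) (edge x' hx' b₂ (Or.inr rfl)) hyI
  have := (hx y hyI z hzI).sub_mul_sq_div_eight_le hm₁ (face a₁ (Or.inl rfl))
    (face b₁ (Or.inr rfl)) hxI
  linarith

theorem stmt_17_general (n : ℕ) (g : ℝ → ℝ → ℝ → ℝ)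
    (hcorners : ∀ x y z : ℝ, (x = 0 ∨ x = 1 / n) → (y = 0 ∨ y = 1 / n) →
      (z = 0 ∨ z = 1 / n) → g x y z = 0)
    (m₁ m₂ m₃ : ℝ) (hm₁ : 0 ≤ m₁) (hm₂ : 0 ≤ m₂) (hm₃ : 0 ≤ m₃)
    (hx : ∀ y ∈ Set.Icc (0 : ℝ) (1 / n), ∀ z ∈ Set.Icc (0 : ℝ) (1 / n),
      ∃ d₁ d₂ : ℝ → ℝ,
        (∀ x ∈ Set.Icc (0 : ℝ) (1 / n), HasDerivAt (fun x => g x y z) (d₁ x) x) ∧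
        (∀ x ∈ Set.Icc (0 : ℝ) (1 / n), HasDerivAt d₁ (d₂ x) x) ∧
        (∀ x ∈ Set.Icc (0 : ℝ) (1 / n), d₂ x ≤ m₁))
    (hy : ∀ x ∈ Set.Icc (0 : ℝ) (1 / n), ∀ z ∈ Set.Icc (0 : ℝ) (1 / n),
      ∃ d₁ d₂ : ℝ → ℝ,
        (∀ y ∈ Set.Icc (0 : ℝ) (1 / n), HasDerivAt (fun y => g x y z) (d₁ y) y) ∧
        (∀ y ∈ Set.Icc (0 : ℝ) (1 / n), HasDerivAt d₁ (d₂ y) y) ∧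
        (∀ y ∈ Set.Icc (0 : ℝ) (1 / n), d₂ y ≤ m₂))
    (hz : ∀ x ∈ Set.Icc (0 : ℝ) (1 / n), ∀ y ∈ Set.Icc (0 : ℝ) (1 / n),
      ∃ d₁ d₂ : ℝ → ℝ,
        (∀ z ∈ Set.Icc (0 : ℝ) (1 / n), HasDerivAt (fun z => g x y z) (d₁ z) z) ∧
        (∀ z ∈ Set.Icc (0 : ℝ) (1 / n), HasDerivAt d₁ (d₂ z) z) ∧
        (∀ z ∈ Set.Icc (0 : ℝ) (1 / n), d₂ z ≤ m₃)) :
    ∀ x ∈ Set.Icc (0 : ℝ) (1 / n), ∀ y ∈ Set.Icc (0 : ℝ) (1 / n),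
      ∀ z ∈ Set.Icc (0 : ℝ) (1 / n),
        g x y z ≥ -((m₁ + m₂ + m₃) / (8 * (n : ℝ) ^ 2)) := by
  intro x hxI y hyI z hzI
  have h := neg_le_of_eq_zero_at_corners hcorners hm₁ hm₂ hm₃ hx hy hz hxI hyI hzI
  convert h using 2
  simp only [sub_zero, one_div, inv_pow]
  ring

/-- Let `g` vanish at the eight corners of the cube `[0, 1/n]³` and suppose that along
each cardinal direction (the other two coordinates fixed in `[0, 1/n]`) it is twice
differentiable with second derivative bounded above by `m₁`, `m₂`, `m₃ ≥ 0` respectively.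
Then `g ≥ −(m₁ + m₂ + m₃)/(8n²)` on the cube. -/
theorem stmt_17 (n : ℕ) (hn : 0 < n) (g : ℝ → ℝ → ℝ → ℝ)
    (hcorners : ∀ x y z : ℝ, (x = 0 ∨ x = 1 / n) → (y = 0 ∨ y = 1 / n) →
      (z = 0 ∨ z = 1 / n) → g x y z = 0)
    (m₁ m₂ m₃ : ℝ) (hm₁ : 0 ≤ m₁) (hm₂ : 0 ≤ m₂) (hm₃ : 0 ≤ m₃)
    (hx : ∀ y ∈ Set.Icc (0 : ℝ) (1 / n), ∀ z ∈ Set.Icc (0 : ℝ) (1 / n),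
      ∃ d₁ d₂ : ℝ → ℝ,
        (∀ x ∈ Set.Icc (0 : ℝ) (1 / n), HasDerivAt (fun x => g x y z) (d₁ x) x) ∧
        (∀ x ∈ Set.Icc (0 : ℝ) (1 / n), HasDerivAt d₁ (d₂ x) x) ∧
        (∀ x ∈ Set.Icc (0 : ℝ) (1 / n), d₂ x ≤ m₁))
    (hy : ∀ x ∈ Set.Icc (0 : ℝ) (1 / n), ∀ z ∈ Set.Icc (0 : ℝ) (1 / n),
      ∃ d₁ d₂ : ℝ → ℝ,
        (∀ y ∈ Set.Icc (0 : ℝ) (1 / n), HasDerivAt (fun y => g x y z) (d₁ y) y) ∧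
        (∀ y ∈ Set.Icc (0 : ℝ) (1 / n), HasDerivAt d₁ (d₂ y) y) ∧
        (∀ y ∈ Set.Icc (0 : ℝ) (1 / n), d₂ y ≤ m₂))
    (hz : ∀ x ∈ Set.Icc (0 : ℝ) (1 / n), ∀ y ∈ Set.Icc (0 : ℝ) (1 / n),
      ∃ d₁ d₂ : ℝ → ℝ,
        (∀ z ∈ Set.Icc (0 : ℝ) (1 / n), HasDerivAt (fun z => g x y z) (d₁ z) z) ∧
        (∀ z ∈ Set.Icc (0 : ℝ) (1 / n), HasDerivAt d₁ (d₂ z) z) ∧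
        (∀ z ∈ Set.Icc (0 : ℝ) (1 / n), d₂ z ≤ m₃)) :
    ∀ x ∈ Set.Icc (0 : ℝ) (1 / n), ∀ y ∈ Set.Icc (0 : ℝ) (1 / n),
      ∀ z ∈ Set.Icc (0 : ℝ) (1 / n),
        g x y z ≥ -((m₁ + m₂ + m₃) / (8 * (n : ℝ) ^ 2)) :=
  stmt_17_general n g hcorners m₁ m₂ m₃ hm₁ hm₂ hm₃ hx hy hz
end
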